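/- An arrangement of k hyperplanes in ℝ^m partitions ℝ^m into at most ∑_{j=0}^{m} C(k, j) connected regions (complement components). -/

import Mathlib

open RealInnerProductSpace Module

/-- A sign vector `s` is realizable for affine functionals `f` if some point gives
all functionals the corresponding strict signs. -/
def RealizableSign {E : Type*} [AddCommGroup E] [Module ℝ E] {k : ℕ}
    (f : Fin k → (E →ᵃ[ℝ] ℝ)) (s : Fin k → Bool) : Prop :=
  ∃ x : E, ∀ i, if s i then 0 < f i x else f i x < 0

lemma sum_choose_succ_succ (k n : ℕ) :
    ∑ j ∈ Finset.range (n + 2), (k + 1).choose j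
      = ∑ j ∈ Finset.range (n + 2), k.choose j + ∑ j ∈ Finset.range (n + 1), k.choose j := by
  rw [Finset.sum_range_succ' (fun j => (k + 1).choose j) (n + 1),
      Finset.sum_range_succ' (fun j => k.choose j) (n + 1)]
  simp only [Nat.choose_succ_succ, Nat.choose_zero_right, Finset.sum_add_distrib,
    Nat.succ_eq_add_one]
  omega

lemma seg_pos {a b t : ℝ} (ht0 : 0 < t) (ht1 : t < 1) (ha : 0 < a) (hb : 0 < b) :
    0 < t * (b - a) + a := by nlinarith

lemma seg_neg {a b t : ℝ} (ht0 : 0 < t) (ht1 : t < 1) (ha : a < 0) (hb : b < 0) :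
    t * (b - a) + a < 0 := by nlinarith

lemma key_count : ∀ (k m : ℕ) (E : Type) [AddCommGroup E] [Module ℝ E]
    [FiniteDimensional ℝ E], finrank ℝ E ≤ m → ∀ f : Fin k → (E →ᵃ[ℝ] ℝ),
    {s : Fin k → Bool | RealizableSign f s}.ncard
      ≤ ∑ j ∈ Finset.range (m + 1), k.choose j := by
  intro k
  induction k with
  | zero =>
    intro m E _ _ _ _ f
    have h1 : {s : Fin 0 → Bool | RealizableSign f s}.ncard ≤ 1 := by
      calc {s : Fin 0 → Bool | RealizableSign f s}.ncard
          ≤ (Set.univ : Set (Fin 0 → Bool)).ncard :=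
            Set.ncard_le_ncard (Set.subset_univ _) Set.finite_univ
        _ = 1 := by simp [Set.ncard_univ, Nat.card_eq_fintype_card]
    refine h1.trans ?_
    have : (1 : ℕ) = Nat.choose 0 0 := rfl
    calc (1:ℕ) = Nat.choose 0 0 := rfl
      _ ≤ ∑ j ∈ Finset.range (m + 1), Nat.choose 0 j :=
        Finset.single_le_sum (fun i _ => Nat.zero_le _) (by simp)
  | succ k ih =>
    intro m E _ _ _ hE f
    set g : Fin k → (E →ᵃ[ℝ] ℝ) := fun i => f i.castSucc with hg
    set fk : E →ᵃ[ℝ] ℝ := f (Fin.last k) with hfk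
    have hmono : ∑ j ∈ Finset.range (m + 1), k.choose j
        ≤ ∑ j ∈ Finset.range (m + 1), (k + 1).choose j :=
      Finset.sum_le_sum fun j _ => Nat.choose_le_choose j (Nat.le_succ k)
    -- restriction of a realizable sign vector is realizable for the deleted system
    have hrest : ∀ s, RealizableSign f s → RealizableSign g (s ∘ Fin.castSucc) := by
      rintro s ⟨x, hx⟩
      exact ⟨x, fun i => hx i.castSucc⟩
    by_cases hlin : fk.linear = 0
    · -- `fk` is constant
      have hconst : ∀ x : E, fk x = fk 0 := by
        intro x
        have h := fk.linearMap_vsub x 0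
        rw [hlin] at h
        simp only [LinearMap.zero_apply, vsub_eq_sub] at h
        linarith [h.symm]
      have hinj : Set.InjOn (fun s : Fin (k + 1) → Bool => s ∘ Fin.castSucc)
          {s | RealizableSign f s} := by
        rintro s ⟨x, hx⟩ s' ⟨x', hx'⟩ hEq
        have h1 : s (Fin.last k) = s' (Fin.last k) := by
          have hA := hx (Fin.last k); have hB := hx' (Fin.last k)
          rw [← hfk] at hA hB
          rw [hconst x] at hA; rw [hconst x'] at hB
          cases hsl : s (Fin.last k) <;> cases hsl' : s' (Fin.last k) <;>
            simp [hsl, hsl'] at hA hB ⊢ <;> linarith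
        funext i
        refine Fin.lastCases h1 (fun j => ?_) i
        exact congrFun hEq j
      calc {s : Fin (k+1) → Bool | RealizableSign f s}.ncard
          ≤ {s : Fin k → Bool | RealizableSign g s}.ncard :=
            Set.ncard_le_ncard_of_injOn _ (fun s hs => hrest s hs) hinj (Set.toFinite _)
        _ ≤ ∑ j ∈ Finset.range (m + 1), k.choose j := ih m E hE g
        _ ≤ _ := hmono
    · -- `fk` is non-constant
      obtain ⟨v, hv⟩ : ∃ v, fk.linear v ≠ 0 := by
        by_contra h; push_neg at h; exact hlin (LinearMap.ext h)
      have hdecomp : ∀ x : E, fk x = fk.linear x + fk 0 := by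
        intro x
        conv_lhs => rw [fk.decomp]
        simp
      -- a point on the hyperplane fk = 0
      set p : E := (-(fk 0 / fk.linear v)) • v with hp
      have hfkp : fk p = 0 := by
        rw [hdecomp, hp, map_smul]
        simp only [smul_eq_mul]
        field_simp
        ring
      set V : Submodule ℝ E := LinearMap.ker fk.linear with hV
      have hrange : LinearMap.range fk.linear = ⊤ := by
        rw [LinearMap.range_eq_top]
        intro r
        refine ⟨(r / fk.linear v) • v, ?_⟩
        rw [map_smul]; simp only [smul_eq_mul]; field_simp
      have hrk : 1 + finrank ℝ V = finrank ℝ E := by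
        have := LinearMap.finrank_range_add_finrank_ker fk.linear
        rwa [hrange, finrank_top, finrank_self] at this
      have hm1 : 1 ≤ m := by
        have : 1 ≤ finrank ℝ E := by omega
        omega
      obtain ⟨n, rfl⟩ : ∃ n, m = n + 1 := ⟨m - 1, by omega⟩
      have hVn : finrank ℝ V ≤ n := by omega
      -- parametrize the hyperplane by V
      set ψ : V →ᵃ[ℝ] E := V.subtype.toAffineMap + AffineMap.const ℝ V p with hψ
      have hψapp : ∀ w : V, ψ w = (w : E) + p := fun w => rfl
      set h : Fin k → (V →ᵃ[ℝ] ℝ) := fun i => (g i).comp ψ with hh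
      -- the "boundary" sign vectors
      set T : Set (Fin (k+1) → Bool) := {s | RealizableSign f s} with hT
      set B : Set (Fin (k+1) → Bool) :=
        {s ∈ T | s (Fin.last k) = true ∧
          (Function.update s (Fin.last k) false) ∈ T} with hB
      have hBsub : B ⊆ T := fun s hs => hs.1
      -- boundary vectors restrict to realizable vectors on the hyperplane
      have hbdry : ∀ s ∈ B, RealizableSign h (s ∘ Fin.castSucc) := by
        rintro s ⟨⟨x, hx⟩, hslast, ⟨y, hy⟩⟩
        have hxpos : 0 < fk x := by
          have := hx (Fin.last k); rw [hslast] at this; simpa using this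
        have hyneg : fk y < 0 := by
          have := hy (Fin.last k)
          simp only [Function.update_self] at this
          simpa using this
        set t : ℝ := fk x / (fk x - fk y) with ht
        have hsub : 0 < fk x - fk y := by linarith
        have ht0 : 0 < t := div_pos hxpos hsub
        have ht1 : t < 1 := (div_lt_one hsub).2 (by linarith)
        set z : E := AffineMap.lineMap x y t with hz
        have hfz : ∀ q : E →ᵃ[ℝ] ℝ, q z = t * (q y - q x) + q x := by
          intro q
          rw [hz, AffineMap.apply_lineMap, AffineMap.lineMap_apply]
          simp [smul_eq_mul]
        have hfkz : fk z = 0 := by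
          rw [hfz fk, ht]; field_simp; ring
        have hzV : z - p ∈ V := by
          rw [hV, LinearMap.mem_ker]
          have := fk.linearMap_vsub z p
          simp only [vsub_eq_sub] at this
          rw [this, hfkz, hfkp, sub_zero]
        refine ⟨⟨z - p, hzV⟩, fun i => ?_⟩
        have hhz : h i ⟨z - p, hzV⟩ = f i.castSucc z := by
          simp only [hh, AffineMap.comp_apply, hψapp]
          congr 1
          exact sub_add_cancel z p
        have hix := hx i.castSucc
        have hiy := hy i.castSucc
        have hne : i.castSucc ≠ Fin.last k := Fin.castSucc_lt_last i |>.ne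
        rw [Function.update_of_ne hne] at hiy
        simp only [Function.comp_apply]
        rcases Bool.dichotomy (s i.castSucc) with hsi | hsi <;> rw [hsi] at hix hiy <;>
          simp only [hsi, if_true, if_false, Bool.false_eq_true] at hix hiy ⊢ <;>
          rw [hhz, hfz]
        · exact seg_neg ht0 ht1 hix hiy
        · exact seg_pos ht0 ht1 hix hiy
      -- injectivity on T \ B
      have hinj1 : Set.InjOn (fun s : Fin (k + 1) → Bool => s ∘ Fin.castSucc) (T \ B) := by
        rintro s ⟨hs, hsB⟩ s' ⟨hs', hsB'⟩ hEq
        have hlast : s (Fin.last k) = s' (Fin.last k) := by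
          by_contra hne
          have hupd : ∀ (u u' : Fin (k+1) → Bool), u ∘ Fin.castSucc = u' ∘ Fin.castSucc →
              u (Fin.last k) = true → u' (Fin.last k) = false →
              Function.update u (Fin.last k) false = u' := by
            intro u u' hE' hu hu'
            funext i
            refine Fin.lastCases ?_ (fun j => ?_) i
            · rw [Function.update_self, hu']
            · rw [Function.update_of_ne (Fin.castSucc_lt_last j).ne]
              exact congrFun hE' j
          cases hc : s (Fin.last k)
          · cases hc' : s' (Fin.last k)
            · exact hne (hc.trans hc'.symm)
            · exact hsB' ⟨hs', hc', by rw [hupd s' s hEq.symm hc' hc]; exact hs⟩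
          · cases hc' : s' (Fin.last k)
            · exact hsB ⟨hs, hc, by rw [hupd s s' hEq hc hc']; exact hs'⟩
            · exact hne (hc.trans hc'.symm)
        funext i
        exact Fin.lastCases hlast (fun j => congrFun hEq j) i
      -- injectivity on B
      have hinj2 : Set.InjOn (fun s : Fin (k + 1) → Bool => s ∘ Fin.castSucc) B := by
        rintro s ⟨_, hsl, _⟩ s' ⟨_, hsl', _⟩ hEq
        funext i
        exact Fin.lastCases (hsl.trans hsl'.symm) (fun j => congrFun hEq j) i
      have hcard1 : (T \ B).ncard ≤ {s : Fin k → Bool | RealizableSign g s}.ncard :=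
        Set.ncard_le_ncard_of_injOn _ (fun s hs => hrest s hs.1) hinj1 (Set.toFinite _)
      have hcard2 : B.ncard ≤ {s : Fin k → Bool | RealizableSign h s}.ncard :=
        Set.ncard_le_ncard_of_injOn _ (fun s hs => hbdry s hs) hinj2 (Set.toFinite _)
      have hsplit : T.ncard = (T \ B).ncard + B.ncard :=
        (Set.ncard_diff_add_ncard_of_subset hBsub (Set.toFinite _)).symm
      calc T.ncard = (T \ B).ncard + B.ncard := hsplit
        _ ≤ ∑ j ∈ Finset.range (n + 2), k.choose j
            + ∑ j ∈ Finset.range (n + 1), k.choose j := by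
            exact Nat.add_le_add (hcard1.trans (ih (n+1) E hE g)) (hcard2.trans (ih n V hVn h))
        _ = ∑ j ∈ Finset.range (n + 2), (k + 1).choose j := (sum_choose_succ_succ k n).symm

/-- An arrangement of `k` hyperplanes in `ℝ^m` partitions `ℝ^m` into at most
`∑_{j=0}^{m} C(k, j)` connected regions (connected components of the complement). -/
theorem hyperplane_arrangement_region_count
    (m k : ℕ) (a : Fin k → EuclideanSpace ℝ (Fin m)) (c : Fin k → ℝ)
    (ha : ∀ i, a i ≠ 0) :
    Nat.card (ConnectedComponents
      ((⋃ i : Fin k, {x : EuclideanSpace ℝ (Fin m) | ⟪a i, x⟫ = c i})ᶜ : Set (EuclideanSpace ℝ (Fin m))))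
      ≤ ∑ j ∈ Finset.range (m + 1), k.choose j := by
  classical
  -- the affine functionals
  set f : Fin k → (EuclideanSpace ℝ (Fin m) →ᵃ[ℝ] ℝ) := fun i =>
    { toFun := fun x => ⟪a i, x⟫ - c i
      linear := (innerSL ℝ (a i)).toLinearMap
      map_vadd' := by
        intro p v
        simp only [vadd_eq_add, ContinuousLinearMap.coe_coe, innerSL_apply_apply, vadd_eq_add]
        rw [inner_add_right]
        ring } with hf
  have hfapp : ∀ i x, f i x = ⟪a i, x⟫ - c i := fun i x => rfl
  set U : Set (EuclideanSpace ℝ (Fin m)) :=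
    (⋃ i : Fin k, {x : EuclideanSpace ℝ (Fin m) | ⟪a i, x⟫ = c i})ᶜ with hU
  have hUmem : ∀ x : EuclideanSpace ℝ (Fin m), x ∈ U ↔ ∀ i, f i x ≠ 0 := by
    intro x
    simp only [hU, Set.mem_compl_iff, Set.mem_iUnion, Set.mem_setOf_eq, not_exists, hfapp,
      sub_ne_zero]
  -- the sign map
  set σ : U → (Fin k → Bool) := fun x i => decide (0 < f i (x : EuclideanSpace ℝ (Fin m))) with hσ
  have hσreal : ∀ x : U, RealizableSign f (σ x) := by
    intro x
    refine ⟨(x : EuclideanSpace ℝ (Fin m)), fun i => ?_⟩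
    have hne := (hUmem x).1 x.2 i
    rcases lt_or_gt_of_ne hne with hlt | hgt
    · simp [hσ, not_lt.2 hlt.le, hlt]
    · simp [hσ, hgt]
  -- continuity of the functionals on U
  have hcont : ∀ i, Continuous (fun z : U => f i (z : EuclideanSpace ℝ (Fin m))) := by
    intro i
    simp only [hfapp]
    exact (Continuous.inner continuous_const continuous_subtype_val).sub continuous_const
  -- σ is constant on connected components
  have hσconst : ∀ x y : U, ConnectedComponents.mk x = ConnectedComponents.mk y →
      σ x = σ y := by
    intro x y hxy
    rw [ConnectedComponents.coe_eq_coe] at hxy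
    have hy : y ∈ connectedComponent x := by
      rw [hxy]; exact mem_connectedComponent
    have hx : x ∈ connectedComponent x := mem_connectedComponent
    funext i
    by_contra hne
    -- opposite strict signs
    have hxne := (hUmem x).1 x.2 i
    have hyne := (hUmem y).1 y.2 i
    have hzero : (0 : ℝ) ∈ (fun z : U => f i (z : EuclideanSpace ℝ (Fin m))) '' connectedComponent x := by
      have hpre := isPreconnected_connectedComponent (x := x)
      have hcOn : ContinuousOn (fun z : U => f i (z : EuclideanSpace ℝ (Fin m))) (connectedComponent x) :=
        (hcont i).continuousOn
      rcases lt_or_gt_of_ne hxne with hxlt | hxgt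
      · rcases lt_or_gt_of_ne hyne with hylt | hygt
        · exfalso; apply hne; simp [hσ, not_lt.2 hxlt.le, not_lt.2 hylt.le]
        · exact hpre.intermediate_value hx hy hcOn ⟨hxlt.le, hygt.le⟩
      · rcases lt_or_gt_of_ne hyne with hylt | hygt
        · exact hpre.intermediate_value hy hx hcOn ⟨hylt.le, hxgt.le⟩
        · exfalso; apply hne; simp [hσ, hxgt, hygt]
    obtain ⟨z, _, hz⟩ := hzero
    exact (hUmem z).1 z.2 i hz
  -- injectivity via convexity of sign cells
  have hinj : ∀ x y : U, σ x = σ y →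
      ConnectedComponents.mk x = ConnectedComponents.mk y := by
    intro x y hxy
    set s := σ x with hs
    set K : Set (EuclideanSpace ℝ (Fin m)) := ⋂ i, (f i) ⁻¹' (if s i then Set.Ioi (0:ℝ) else Set.Iio (0:ℝ)) with hK
    have hKconv : Convex ℝ K := by
      apply convex_iInter
      intro i
      by_cases hsi : s i = true
      · rw [hsi]; simpa using (convex_Ioi (0:ℝ)).affine_preimage (f i)
      · simp only [Bool.not_eq_true] at hsi
        rw [hsi]; simpa using (convex_Iio (0:ℝ)).affine_preimage (f i)
    have hmemK : ∀ z : U, σ z = s → (z : EuclideanSpace ℝ (Fin m)) ∈ K := by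
      intro z hz
      rw [hK, Set.mem_iInter]
      intro i
      have hne := (hUmem z).1 z.2 i
      have : σ z i = s i := congrFun hz i
      by_cases hsi : s i = true
      · rw [hsi] at this ⊢
        simp only [hσ, decide_eq_true_eq] at this
        simpa using this
      · simp only [Bool.not_eq_true] at hsi
        rw [hsi] at this ⊢
        simp only [hσ, decide_eq_false_iff_not, not_lt] at this
        simp only [Set.mem_preimage, if_false, Set.mem_Iio, Bool.false_eq_true]
        exact lt_of_le_of_ne this hne
    have hKU : K ⊆ U := by
      intro z hzK
      rw [hUmem]
      intro i
      rw [hK, Set.mem_iInter] at hzK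
      have := hzK i
      by_cases hsi : s i = true <;> simp [hsi] at this <;>
        first
        | exact ne_of_gt this
        | exact ne_of_lt this
    -- pull back to the subtype
    set S : Set U := Subtype.val ⁻¹' K with hS
    have himg : Subtype.val '' S = K := by
      rw [hS, Subtype.image_preimage_coe]
      exact Set.inter_eq_self_of_subset_right hKU
    have hSpre : IsPreconnected S := by
      rw [← Topology.IsInducing.subtypeVal.isPreconnected_image, himg]
      exact hKconv.isPreconnected
    have hxS : x ∈ S := hmemK x rfl
    have hyS : y ∈ S := hmemK y hxy.symm
    rw [ConnectedComponents.coe_eq_coe]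
    exact connectedComponent_eq (hSpre.subset_connectedComponent hxS hyS)
  -- assemble the injection into realizable sign vectors
  by_cases hne : Nonempty (ConnectedComponents U)
  · have hsurj : Function.Surjective (ConnectedComponents.mk : U → ConnectedComponents U) :=
      ConnectedComponents.surjective_coe
    set sec : ConnectedComponents U → U := Function.surjInv hsurj with hsec
    have hsecspec : ∀ C, ConnectedComponents.mk (sec C) = C :=
      Function.surjInv_eq hsurj
    set Φ : ConnectedComponents U → {s : Fin k → Bool // RealizableSign f s} :=
      fun C => ⟨σ (sec C), hσreal (sec C)⟩ with hΦ
    have hΦinj : Function.Injective Φ := by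
      intro C C' hCC
      have : σ (sec C) = σ (sec C') := congrArg Subtype.val hCC
      have := hinj _ _ this
      rw [hsecspec, hsecspec] at this
      exact this
    calc Nat.card (ConnectedComponents U)
        ≤ Nat.card {s : Fin k → Bool // RealizableSign f s} :=
          Nat.card_le_card_of_injective Φ hΦinj
      _ = {s : Fin k → Bool | RealizableSign f s}.ncard :=
          Nat.card_coe_set_eq _
      _ ≤ ∑ j ∈ Finset.range (m + 1), k.choose j :=
          key_count k m (EuclideanSpace ℝ (Fin m)) (le_of_eq (finrank_euclideanSpace_fin)) f
  · rw [not_nonempty_iff] at hne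
    simp [Nat.card_of_isEmpty]
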